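/- arXiv:1910.11855 — 3 statements merged into one kernel-verified Lean document; each statement's English description precedes it below -/
import Mathlib

section
/- Let N : (0,∞) → [0,∞) be a nondecreasing function, and let n, p > 0. Suppose that for every pair λ, μ > 0 and every M ∈ ℕ such that M disjoint open cubes of side length (λ/μ)^{1/p} can be packed into the unit cube (equivalently M ≤ ⌊(μ/λ)^{1/p}⌋ⁿ when taking M maximal), the superadditivity N(μ) ≥ M · N(λ) holds with M = ⌊(μ/λ)^{1/p}⌋ⁿ. If additionally there exist constants 0 < C₁ ≤ C₂ with C₁λ^{n/p} ≤ N(λ) ≤ C₂λ^{n/p} for all large λ, then the limit lim_{λ→∞} λ^{-n/p} N(λ) exists and lies in [C₁, C₂]. -/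
/-!
Write `f λ = λ^(-n/p) N(λ)` and `r = (μ/λ)^(1/p)`. The packing inequality `N(μ) ≥ ⌊r⌋ⁿ N(λ)`
reads `f μ ≥ (⌊r⌋/r)ⁿ f λ`, and `⌊r⌋/r → 1` as `μ → ∞`. Hence every value `f λ` is at most
`liminf f`, so `limsup f ≤ liminf f`: the two-sided growth bounds make both finite and trap the
limit in `[C₁, C₂]`.
-/

open Filter Topology

theorem Filter.tendsto_liminf_of_eventually_le_liminf {α β : Type*}
    [ConditionallyCompleteLinearOrder β] [TopologicalSpace β] [OrderTopology β]
    {l : Filter α} [l.NeBot] {f : α → β} (hbdd_le : l.IsBoundedUnder (· ≤ ·) f) (hbdd_ge : l.IsBoundedUnder (· ≥ ·) f)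
    (h : ∀ᶠ x in l, f x ≤ l.liminf f) : Tendsto f l (𝓝 (l.liminf f)) :=
  tendsto_of_liminf_eq_limsup rfl
    (le_antisymm (limsup_le_of_le hbdd_ge.isCoboundedUnder_le h) (liminf_le_limsup hbdd_le hbdd_ge))
    hbdd_le hbdd_ge

theorem tendsto_natFloor_div_self_rpow (n : ℝ) :
    Tendsto (fun x : ℝ => ((⌊x⌋₊ : ℝ) / x) ^ n) atTop (𝓝 1) := by
  simpa [Function.comp_def] using
    (Real.continuousAt_rpow_const 1 n (Or.inl one_ne_zero)).tendsto.comp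
      tendsto_nat_floor_div_atTop

theorem eventually_rpow_neg_mul_mem_Icc {s C₁ C₂ Λ : ℝ} {N : ℝ → ℝ}
    (hgrowth : ∀ lam : ℝ, Λ ≤ lam → C₁ * lam ^ s ≤ N lam ∧ N lam ≤ C₂ * lam ^ s) :
    ∀ᶠ lam in atTop, lam ^ (-s) * N lam ∈ Set.Icc C₁ C₂ := by
  filter_upwards [eventually_ge_atTop Λ, eventually_gt_atTop 0] with lam hΛ hpos
  have hinv : lam ^ (-s) * lam ^ s = 1 := by rw [← Real.rpow_add hpos]; simp
  have hnonneg : 0 ≤ lam ^ (-s) := Real.rpow_nonneg hpos.le _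
  obtain ⟨hlow, hup⟩ := hgrowth lam hΛ
  constructor
  · calc C₁ = lam ^ (-s) * (C₁ * lam ^ s) := by rw [mul_left_comm, hinv, mul_one]
      _ ≤ lam ^ (-s) * N lam := mul_le_mul_of_nonneg_left hlow hnonneg
  · calc lam ^ (-s) * N lam ≤ lam ^ (-s) * (C₂ * lam ^ s) := mul_le_mul_of_nonneg_left hup hnonneg
      _ = C₂ := by rw [mul_left_comm, hinv, mul_one]

section Packing

variable {n p : ℝ} {N : ℝ → ℝ} {lam mu : ℝ}

theorem rpow_neg_mul_natFloor_rpow_mul (hlam : 0 < lam) (hmu : 0 < mu) :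
    mu ^ (-(n / p)) * ((⌊(mu / lam) ^ (1 / p)⌋₊ : ℝ) ^ n * N lam) =
      ((⌊(mu / lam) ^ (1 / p)⌋₊ : ℝ) / (mu / lam) ^ (1 / p)) ^ n * (lam ^ (-(n / p)) * N lam) := by
  have hq : 0 < mu / lam := div_pos hmu hlam
  have hr : ((mu / lam) ^ (1 / p)) ^ n = (mu / lam) ^ (n / p) := by
    rw [← Real.rpow_mul hq.le, one_div_mul_eq_div]
  have hsplit : lam ^ (-(n / p)) / (mu / lam) ^ (n / p) = mu ^ (-(n / p)) := by
    rw [div_eq_mul_inv, ← Real.rpow_neg hq.le, ← Real.mul_rpow hlam.le hq.le,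
      mul_div_cancel₀ _ hlam.ne']
  rw [Real.div_rpow (Nat.cast_nonneg _) (Real.rpow_nonneg hq.le _), hr, ← hsplit]
  ring

theorem rpow_neg_mul_le_liminf_of_packing (hp : 0 < p)
    (hpack : ∀ lam mu : ℝ, 0 < lam → 0 < mu →
      ((⌊(mu / lam) ^ (1 / p)⌋₊ : ℝ)) ^ n * N lam ≤ N mu)
    (hbdd : atTop.IsBoundedUnder (· ≤ ·) fun mu : ℝ => mu ^ (-(n / p)) * N mu) (hlam : 0 < lam) :
    lam ^ (-(n / p)) * N lam ≤ atTop.liminf fun mu : ℝ => mu ^ (-(n / p)) * N mu := by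
  have hratio : Tendsto (fun mu : ℝ => (mu / lam) ^ (1 / p)) atTop atTop :=
    (tendsto_rpow_atTop (by positivity)).comp (tendsto_id.atTop_div_const hlam)
  have hscaled : Tendsto (fun mu : ℝ => ((⌊(mu / lam) ^ (1 / p)⌋₊ : ℝ) / (mu / lam) ^ (1 / p)) ^ n *
      (lam ^ (-(n / p)) * N lam)) atTop (𝓝 (lam ^ (-(n / p)) * N lam)) := by
    simpa using
      ((tendsto_natFloor_div_self_rpow n).comp hratio).mul_const (lam ^ (-(n / p)) * N lam)
  have hle : ∀ᶠ mu in atTop, ((⌊(mu / lam) ^ (1 / p)⌋₊ : ℝ) / (mu / lam) ^ (1 / p)) ^ n *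
      (lam ^ (-(n / p)) * N lam) ≤ mu ^ (-(n / p)) * N mu := by
    filter_upwards [eventually_gt_atTop 0] with mu hmu
    rw [← rpow_neg_mul_natFloor_rpow_mul hlam hmu]
    exact mul_le_mul_of_nonneg_left (hpack lam mu hlam hmu) (Real.rpow_nonneg hmu.le _)
  rw [← hscaled.liminf_eq]
  exact liminf_le_liminf hle hscaled.isBoundedUnder_ge hbdd.isCoboundedUnder_ge

end Packing

theorem weyl_limit_exists_of_packing_general (n p : ℝ) (hp : 0 < p)
    (N : ℝ → ℝ)
    (hpack : ∀ lam mu : ℝ, 0 < lam → 0 < mu →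
      ((⌊(mu / lam) ^ (1 / p)⌋₊ : ℝ)) ^ n * N lam ≤ N mu)
    (C₁ C₂ Λ : ℝ)
    (hgrowth : ∀ lam : ℝ, Λ ≤ lam →
      C₁ * lam ^ (n / p) ≤ N lam ∧ N lam ≤ C₂ * lam ^ (n / p)) :
    ∃ L ∈ Set.Icc C₁ C₂,
      Tendsto (fun lam : ℝ => lam ^ (-(n / p)) * N lam) atTop (nhds L) := by
  have hbounds := eventually_rpow_neg_mul_mem_Icc hgrowth
  have hbdd_le : atTop.IsBoundedUnder (· ≤ ·) fun lam : ℝ => lam ^ (-(n / p)) * N lam :=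
    isBoundedUnder_of_eventually_le (hbounds.mono fun _ h => h.2)
  have hbdd_ge : atTop.IsBoundedUnder (· ≥ ·) fun lam : ℝ => lam ^ (-(n / p)) * N lam :=
    isBoundedUnder_of_eventually_ge (hbounds.mono fun _ h => h.1)
  have hlim := tendsto_liminf_of_eventually_le_liminf hbdd_le hbdd_ge <|
    (eventually_gt_atTop 0).mono fun _ hlam =>
      rpow_neg_mul_le_liminf_of_packing hp hpack hbdd_le hlam
  exact ⟨_, isClosed_Icc.mem_of_tendsto hlim hbounds, hlim⟩

theorem weyl_limit_exists_of_packing (n p : ℝ) (hn : 0 < n) (hp : 0 < p)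
    (N : ℝ → ℝ) (hN0 : ∀ lam : ℝ, 0 < lam → 0 ≤ N lam)
    (hmono : ∀ lam mu : ℝ, 0 < lam → lam ≤ mu → N lam ≤ N mu)
    (hpack : ∀ lam mu : ℝ, 0 < lam → 0 < mu →
      ((⌊(mu / lam) ^ (1 / p)⌋₊ : ℝ)) ^ n * N lam ≤ N mu)
    (C₁ C₂ Λ : ℝ) (hC₁ : 0 < C₁) (hC₁₂ : C₁ ≤ C₂)
    (hgrowth : ∀ lam : ℝ, Λ ≤ lam →
      C₁ * lam ^ (n / p) ≤ N lam ∧ N lam ≤ C₂ * lam ^ (n / p)) :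
    ∃ L ∈ Set.Icc C₁ C₂,
      Tendsto (fun lam : ℝ => lam ^ (-(n / p)) * N lam) atTop (nhds L) :=
  weyl_limit_exists_of_packing_general n p hp N hpack C₁ C₂ Λ hgrowth
end

section
/- Let N : (0,∞) → [0,∞) satisfy the superadditivity N(μ) ≥ ⌊(μ/λ)^{1/p}⌋ⁿ · N(λ) for all 0 < λ ≤ μ, with n, p > 0 fixed. Then liminf_{λ→∞} λ^{-n/p} N(λ) ≥ limsup_{λ→∞} λ^{-n/p} N(λ); in particular λ^{-n/p}N(λ) converges in [0,∞]. -/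
open Filter
open scoped ENNReal

private lemma weyl_aux_tendsto (p : ℝ) (hp : 0 < p) (lam : ℝ) (hlam : 0 < lam) :
    Tendsto (fun mu : ℝ => (⌊(mu / lam) ^ (1 / p)⌋₊ : ℝ) * mu ^ (-(1 / p))) atTop
      (nhds (lam ^ (-(1 / p)))) := by
  have h0 : Tendsto (fun mu : ℝ => mu ^ (-(1 / p))) atTop (nhds 0) :=
    tendsto_rpow_neg_atTop (by positivity)
  have hlow : Tendsto (fun mu : ℝ => lam ^ (-(1 / p)) - mu ^ (-(1 / p))) atTop
      (nhds (lam ^ (-(1 / p)))) := by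
    simpa using tendsto_const_nhds.sub h0
  refine tendsto_of_tendsto_of_tendsto_of_le_of_le' hlow tendsto_const_nhds ?_ ?_
  · filter_upwards [eventually_ge_atTop (max lam 1)] with mu hmu
    have hmu0 : (0:ℝ) < mu := lt_of_lt_of_le (by positivity) (le_trans (le_max_right _ _) hmu)
    have hid : (mu / lam) ^ (1 / p) * mu ^ (-(1 / p)) = lam ^ (-(1 / p)) := by
      rw [Real.rpow_neg hmu0.le, Real.rpow_neg hlam.le, ← Real.inv_rpow hmu0.le,
        ← Real.inv_rpow hlam.le, ← Real.mul_rpow (by positivity) (by positivity)]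
      congr 1
      field_simp
    have hfl : (mu / lam) ^ (1 / p) - 1 ≤ (⌊(mu / lam) ^ (1 / p)⌋₊ : ℝ) :=
      (Nat.sub_one_lt_floor _).le
    calc lam ^ (-(1 / p)) - mu ^ (-(1 / p))
        = ((mu / lam) ^ (1 / p) - 1) * mu ^ (-(1 / p)) := by rw [sub_mul, one_mul, hid]
      _ ≤ (⌊(mu / lam) ^ (1 / p)⌋₊ : ℝ) * mu ^ (-(1 / p)) :=
          mul_le_mul_of_nonneg_right hfl (by positivity)
  · filter_upwards [eventually_ge_atTop (max lam 1)] with mu hmu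
    have hmu0 : (0:ℝ) < mu := lt_of_lt_of_le (by positivity) (le_trans (le_max_right _ _) hmu)
    have hid : (mu / lam) ^ (1 / p) * mu ^ (-(1 / p)) = lam ^ (-(1 / p)) := by
      rw [Real.rpow_neg hmu0.le, Real.rpow_neg hlam.le, ← Real.inv_rpow hmu0.le,
        ← Real.inv_rpow hlam.le, ← Real.mul_rpow (by positivity) (by positivity)]
      congr 1
      field_simp
    calc (⌊(mu / lam) ^ (1 / p)⌋₊ : ℝ) * mu ^ (-(1 / p))
        ≤ (mu / lam) ^ (1 / p) * mu ^ (-(1 / p)) :=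
          mul_le_mul_of_nonneg_right (Nat.floor_le (by positivity)) (by positivity)
      _ = lam ^ (-(1 / p)) := hid

theorem weyl_liminf_ge_limsup_of_packing (n p : ℝ) (hn : 0 < n) (hp : 0 < p)
    (N : ℝ → ℝ) (hN0 : ∀ lam : ℝ, 0 < lam → 0 ≤ N lam)
    (hpack : ∀ lam mu : ℝ, 0 < lam → lam ≤ mu →
      ((⌊(mu / lam) ^ (1 / p)⌋₊ : ℝ)) ^ n * N lam ≤ N mu) :
    limsup (fun lam : ℝ => ENNReal.ofReal (lam ^ (-(n / p)) * N lam)) atTop ≤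
      liminf (fun lam : ℝ => ENNReal.ofReal (lam ^ (-(n / p)) * N lam)) atTop ∧
    ∃ L : ℝ≥0∞,
      Tendsto (fun lam : ℝ => ENNReal.ofReal (lam ^ (-(n / p)) * N lam)) atTop (nhds L) := by
  set f : ℝ → ℝ≥0∞ := fun lam => ENNReal.ofReal (lam ^ (-(n / p)) * N lam) with hf
  have key : ∀ lam : ℝ, 0 < lam → ENNReal.ofReal (lam ^ (-(n / p)) * N lam) ≤ liminf f atTop := by
    intro lam hlam
    set g : ℝ → ℝ := fun mu => ((⌊(mu / lam) ^ (1 / p)⌋₊ : ℝ) * mu ^ (-(1 / p))) ^ n * N lam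
      with hg
    have hpow : (lam ^ (-(1 / p))) ^ n = lam ^ (-(n / p)) := by
      rw [← Real.rpow_mul hlam.le, show -(1 / p) * n = -(n / p) by ring]
    have hgt : Tendsto g atTop (nhds (lam ^ (-(n / p)) * N lam)) := by
      have := ((weyl_aux_tendsto p hp lam hlam).rpow_const (Or.inr hn.le)).mul_const (N lam)
      rwa [hpow] at this
    have hot : Tendsto (fun mu => ENNReal.ofReal (g mu)) atTop
        (nhds (ENNReal.ofReal (lam ^ (-(n / p)) * N lam))) :=
      (ENNReal.continuous_ofReal.tendsto _).comp hgt
    have hle : ∀ᶠ mu in atTop, ENNReal.ofReal (g mu) ≤ f mu := by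
      filter_upwards [eventually_ge_atTop (max lam 1)] with mu hmu
      have hmu0 : (0:ℝ) < mu := lt_of_lt_of_le (by positivity) (le_trans (le_max_right _ _) hmu)
      have hmulam : lam ≤ mu := le_trans (le_max_left _ _) hmu
      refine ENNReal.ofReal_le_ofReal ?_
      have h1 : g mu = (⌊(mu / lam) ^ (1 / p)⌋₊ : ℝ) ^ n * mu ^ (-(n / p)) * N lam := by
        simp only [hg]
        rw [Real.mul_rpow (Nat.cast_nonneg _) (by positivity), ← Real.rpow_mul hmu0.le,
          show -(1 / p) * n = -(n / p) by ring]
      rw [h1, mul_comm ((⌊(mu / lam) ^ (1 / p)⌋₊ : ℝ) ^ n) (mu ^ (-(n / p))), mul_assoc]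
      exact mul_le_mul_of_nonneg_left (hpack lam mu hlam hmulam) (by positivity)
    calc ENNReal.ofReal (lam ^ (-(n / p)) * N lam)
        = liminf (fun mu => ENNReal.ofReal (g mu)) atTop := (hot.liminf_eq).symm
      _ ≤ liminf f atTop := liminf_le_liminf hle
  have hmain : limsup f atTop ≤ liminf f atTop := by
    refine limsup_le_of_le (by isBoundedDefault) ?_
    filter_upwards [eventually_gt_atTop (0:ℝ)] with lam hlam
    exact key lam hlam
  refine ⟨hmain, limsup f atTop, ?_⟩
  exact tendsto_of_liminf_eq_limsup (le_antisymm liminf_le_limsup hmain) rfl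
end

section
/- Let 1 < p < ∞ and ε, λ', λ'' > 0, and set λ = λ'λ''/(λ' + λ'' + ε⁻¹). Let u ∈ W^{1,p}(U) for a bounded open U ⊂ ℝⁿ with u|_{U_ε} not identically zero, where U_ε = {x ∈ U : 0 < dist(x,∂U) < ε}, and let φ(x) = min(ε⁻¹ dist(x,∂U), 1). Suppose ‖∇(φu)‖_{L^p(U)} ≥ λ'‖φu‖_{L^p(U)} and ‖∇u‖_{L^p(U_ε)} ≥ λ''‖u‖_{L^p(U_ε)}. Then ‖∇u‖_{L^p(U)} ≥ λ‖u‖_{L^p(U)}. -/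
/-!
Write `u = φu + (1 - φ)u`. On `U` off the collar `U_ε` the cutoff `φ` equals `1`, so pointwise
`|u| ≤ |φu| + |1_{U_ε} u|` and `‖u‖ ≤ ‖φu‖ + ‖u‖_{U_ε}`. The cutoff is `ε⁻¹`-Lipschitz, hence
differentiable almost everywhere (Rademacher), and off the collar it attains its maximum, so its
differential vanishes there; the product rule then gives `‖∇(φu)‖ ≤ ‖∇u‖ + ε⁻¹‖u‖_{U_ε}`.
With `λ'‖φu‖ ≤ ‖∇(φu)‖` and `λ''‖u‖_{U_ε} ≤ ‖∇u‖_{U_ε} ≤ ‖∇u‖` this yields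
`λ'λ''‖u‖ ≤ (λ' + λ'' + ε⁻¹)‖∇u‖`.
-/

open MeasureTheory Metric

namespace MeasureTheory

variable {α E F : Type*} [MeasurableSpace α] {μ ν : Measure α} {p : ENNReal}
  [NormedAddCommGroup E] [NormedAddCommGroup F] {f : α → E} {g : α → F}

lemma lpNorm_ofReal_eq_integral_norm_rpow {q : ℝ} (hq : 0 < q) (hf : AEStronglyMeasurable f μ) :
    lpNorm f (ENNReal.ofReal q) μ = (∫ x, ‖f x‖ ^ q ∂μ) ^ (1 / q) := by
  rw [lpNorm_eq_integral_norm_rpow_toReal (by simpa using hq) ENNReal.ofReal_ne_top hf,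
    ENNReal.toReal_ofReal hq.le, one_div]

lemma memLp_ofReal_of_integrable_norm_rpow {q : ℝ} (hq : 0 < q) (hf : AEStronglyMeasurable f μ)
    (hfq : Integrable (fun x => ‖f x‖ ^ q) μ) : MemLp f (ENNReal.ofReal q) μ := by
  rw [← integrable_norm_rpow_iff hf (by simpa using hq) ENNReal.ofReal_ne_top,
    ENNReal.toReal_ofReal hq.le]
  exact hfq

lemma lpNorm_mono_ae_real {g : α → ℝ} (hg : MemLp g p μ) (h : ∀ᵐ x ∂μ, ‖f x‖ ≤ g x) :
    lpNorm f p μ ≤ lpNorm g p μ := by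
  by_cases hf : AEStronglyMeasurable f μ
  · rw [← toReal_eLpNorm hf, ← toReal_eLpNorm hg.aestronglyMeasurable]
    exact ENNReal.toReal_mono hg.eLpNorm_ne_top (eLpNorm_mono_ae_real h)
  · simp [hf]

lemma lpNorm_le_add_of_norm_le_add (hp : 1 ≤ p) (hf : MemLp f p μ) (hg : MemLp g p μ)
    {k : α → E} (hk : ∀ᵐ x ∂μ, ‖k x‖ ≤ ‖f x‖ + ‖g x‖) :
    lpNorm k p μ ≤ lpNorm f p μ + lpNorm g p μ := by
  calc lpNorm k p μ ≤ lpNorm ((fun x => ‖f x‖) + fun x => ‖g x‖) p μ :=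
        lpNorm_mono_ae_real (hf.norm.add hg.norm) hk
    _ ≤ lpNorm (fun x => ‖f x‖) p μ + lpNorm (fun x => ‖g x‖) p μ := lpNorm_add_le hf.norm hp
    _ = lpNorm f p μ + lpNorm g p μ := by
      rw [lpNorm_norm hf.aestronglyMeasurable, lpNorm_norm hg.aestronglyMeasurable]

lemma lpNorm_mono_measure (hf : MemLp f p ν) (hμν : μ ≤ ν) : lpNorm f p μ ≤ lpNorm f p ν := by
  rw [← toReal_eLpNorm hf.aestronglyMeasurable,
    ← toReal_eLpNorm (hf.mono_measure hμν).aestronglyMeasurable]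
  exact ENNReal.toReal_mono hf.eLpNorm_ne_top (eLpNorm_mono_measure f hμν)

lemma lpNorm_indicator_eq_lpNorm_restrict {s : Set α} (hs : MeasurableSet s) :
    lpNorm (s.indicator f) p μ = lpNorm f p (μ.restrict s) := by
  by_cases hf : AEStronglyMeasurable f (μ.restrict s)
  · rw [← toReal_eLpNorm hf, ← toReal_eLpNorm ((aestronglyMeasurable_indicator_iff hs).2 hf),
      eLpNorm_indicator_eq_eLpNorm_restrict hs]
  · rw [lpNorm_of_not_aestronglyMeasurable hf, lpNorm_of_not_aestronglyMeasurable
      (mt (aestronglyMeasurable_indicator_iff hs).1 hf)]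

lemma lpNorm_indicator_restrict_of_subset {s t : Set α} (hs : MeasurableSet s) (hst : s ⊆ t) :
    lpNorm (s.indicator f) p (μ.restrict t) = lpNorm f p (μ.restrict s) := by
  rw [lpNorm_indicator_eq_lpNorm_restrict hs, Measure.restrict_restrict hs,
    Set.inter_eq_self_of_subset_left hst]

end MeasureTheory

section Cutoff

variable {X : Type*} [PseudoMetricSpace X] {U : Set X} {ε : ℝ} {x : X}

-- `U_ε` and `φ` of the paper.
def boundaryCollar (U : Set X) (ε : ℝ) : Set X :=
  {x ∈ U | 0 < infDist x (frontier U) ∧ infDist x (frontier U) < ε}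

noncomputable def boundaryCutoff (U : Set X) (ε : ℝ) (x : X) : ℝ :=
  min (ε⁻¹ * infDist x (frontier U)) 1

lemma boundaryCutoff_nonneg (hε : 0 ≤ ε) (x : X) : 0 ≤ boundaryCutoff U ε x :=
  le_min (mul_nonneg (inv_nonneg.2 hε) infDist_nonneg) zero_le_one

lemma boundaryCutoff_le_one (x : X) : boundaryCutoff U ε x ≤ 1 := min_le_right _ _

lemma abs_boundaryCutoff_le_one (hε : 0 ≤ ε) (x : X) : |boundaryCutoff U ε x| ≤ 1 := by
  rw [abs_of_nonneg (boundaryCutoff_nonneg hε x)]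
  exact boundaryCutoff_le_one x

lemma lipschitzWith_boundaryCutoff : LipschitzWith ‖ε⁻¹‖₊ (boundaryCutoff U ε) := by
  have h := ((lipschitzWith_smul ε⁻¹).comp (lipschitz_infDist_pt (frontier U))).min_const 1
  rwa [mul_one] at h

lemma continuous_boundaryCutoff : Continuous (boundaryCutoff U ε) :=
  lipschitzWith_boundaryCutoff.continuous

lemma boundaryCollar_subset : boundaryCollar U ε ⊆ U := fun _ hx => hx.1

lemma frontier_nonempty_of_boundaryCollar_nonempty (h : (boundaryCollar U ε).Nonempty) :
    (frontier U).Nonempty := by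
  obtain ⟨x, -, hx, -⟩ := h
  by_contra hfr
  rw [Set.not_nonempty_iff_eq_empty.1 hfr, infDist_empty] at hx
  exact hx.false

lemma boundaryCutoff_eq_one (hU : IsOpen U) (hfr : (frontier U).Nonempty) (hε : 0 < ε)
    (hxU : x ∈ U) (hx : x ∉ boundaryCollar U ε) : boundaryCutoff U ε x = 1 := by
  have hpos : 0 < infDist x (frontier U) :=
    (isClosed_frontier.notMem_iff_infDist_pos hfr).1 fun h => (hU.frontier_eq ▸ h).2 hxU
  have hfar : ε ≤ infDist x (frontier U) := not_lt.1 fun h => hx ⟨hxU, hpos, h⟩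
  exact min_eq_right ((one_le_inv_mul₀ hε).2 hfar)

lemma measurableSet_boundaryCollar [MeasurableSpace X] [OpensMeasurableSpace X] (hU : IsOpen U) :
    MeasurableSet (boundaryCollar U ε) :=
  hU.measurableSet.inter ((continuous_infDist_pt (frontier U)).measurable measurableSet_Ioo)

lemma norm_le_norm_boundaryCutoff_mul_add_norm_indicator (hU : IsOpen U)
    (hfr : (frontier U).Nonempty) (hε : 0 < ε) (hxU : x ∈ U) (u : X → ℝ) :
    ‖u x‖ ≤ ‖boundaryCutoff U ε x * u x‖ + ‖(boundaryCollar U ε).indicator u x‖ := by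
  by_cases hx : x ∈ boundaryCollar U ε
  · rw [Set.indicator_of_mem hx]
    exact le_add_of_nonneg_left (norm_nonneg _)
  · rw [Set.indicator_of_notMem hx, boundaryCutoff_eq_one hU hfr hε hxU hx]
    simp

end Cutoff

section Derivative

variable {E : Type*} [NormedAddCommGroup E] [NormedSpace ℝ E] {U : Set E} {ε : ℝ} {x : E}

lemma norm_fderiv_boundaryCutoff_le (hε : 0 ≤ ε) : ‖fderiv ℝ (boundaryCutoff U ε) x‖ ≤ ε⁻¹ := by
  simpa [abs_of_nonneg hε] using
    norm_fderiv_le_of_lipschitz ℝ (lipschitzWith_boundaryCutoff (U := U) (ε := ε)) (x₀ := x)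

lemma fderiv_boundaryCutoff_eq_zero (hU : IsOpen U) (hfr : (frontier U).Nonempty) (hε : 0 < ε)
    (hxU : x ∈ U) (hx : x ∉ boundaryCollar U ε) : fderiv ℝ (boundaryCutoff U ε) x = 0 :=
  IsLocalMax.fderiv_eq_zero <| .of_forall fun y => by
    rw [boundaryCutoff_eq_one hU hfr hε hxU hx]
    exact boundaryCutoff_le_one y

lemma norm_fderiv_boundaryCutoff_mul_le (hU : IsOpen U) (hfr : (frontier U).Nonempty) (hε : 0 < ε)
    (hxU : x ∈ U) {u : E → ℝ} (hφ : DifferentiableAt ℝ (boundaryCutoff U ε) x)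
    (hu : DifferentiableAt ℝ u x) :
    ‖fderiv ℝ (fun y => boundaryCutoff U ε y * u y) x‖ ≤
      ‖fderiv ℝ u x‖ + ‖ε⁻¹ * (boundaryCollar U ε).indicator u x‖ := by
  have hDu : |boundaryCutoff U ε x| * ‖fderiv ℝ u x‖ ≤ ‖fderiv ℝ u x‖ :=
    mul_le_of_le_one_left (norm_nonneg _) (abs_boundaryCutoff_le_one hε.le x)
  have hDφ : |u x| * ‖fderiv ℝ (boundaryCutoff U ε) x‖ ≤
      ‖ε⁻¹ * (boundaryCollar U ε).indicator u x‖ := by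
    by_cases hx : x ∈ boundaryCollar U ε
    · rw [Set.indicator_of_mem hx, norm_mul, Real.norm_eq_abs, Real.norm_eq_abs,
        abs_of_pos (inv_pos.2 hε), mul_comm]
      exact mul_le_mul_of_nonneg_right (norm_fderiv_boundaryCutoff_le hε.le) (abs_nonneg _)
    · rw [fderiv_boundaryCutoff_eq_zero hU hfr hε hxU hx, norm_zero, mul_zero]
      exact norm_nonneg _
  calc ‖fderiv ℝ (fun y => boundaryCutoff U ε y * u y) x‖
      = ‖boundaryCutoff U ε x • fderiv ℝ u x + u x • fderiv ℝ (boundaryCutoff U ε) x‖ := by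
        rw [fderiv_fun_mul hφ hu]
    _ ≤ |boundaryCutoff U ε x| * ‖fderiv ℝ u x‖ + |u x| * ‖fderiv ℝ (boundaryCutoff U ε) x‖ := by
        rw [← Real.norm_eq_abs, ← Real.norm_eq_abs, ← norm_smul, ← norm_smul]
        exact norm_add_le _ _
    _ ≤ _ := add_le_add hDu hDφ

end Derivative

section Estimates

variable {p : ENNReal} {ε : ℝ}

lemma lpNorm_le_lpNorm_boundaryCutoff_mul_add {X : Type*} [PseudoMetricSpace X]
    [MeasurableSpace X] [OpensMeasurableSpace X] {μ : Measure X} {U : Set X} (hp : 1 ≤ p)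
    (hU : IsOpen U) (hfr : (frontier U).Nonempty) (hε : 0 < ε) {u : X → ℝ}
    (hu : MemLp u p (μ.restrict U)) :
    lpNorm u p (μ.restrict U) ≤ lpNorm (fun x => boundaryCutoff U ε x * u x) p (μ.restrict U) +
      lpNorm u p (μ.restrict (boundaryCollar U ε)) := by
  have hW := measurableSet_boundaryCollar (ε := ε) hU
  have hφu : MemLp (fun x => boundaryCutoff U ε x * u x) p (μ.restrict U) :=
    hu.of_le (continuous_boundaryCutoff.aestronglyMeasurable.mul hu.1) <| .of_forall fun x => by
      rw [norm_mul, Real.norm_eq_abs (boundaryCutoff U ε x)]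
      exact mul_le_of_le_one_left (norm_nonneg _) (abs_boundaryCutoff_le_one hε.le x)
  have hpt : ∀ᵐ x ∂μ.restrict U,
      ‖u x‖ ≤ ‖boundaryCutoff U ε x * u x‖ + ‖(boundaryCollar U ε).indicator u x‖ :=
    ae_restrict_of_forall_mem hU.measurableSet fun x hx =>
      norm_le_norm_boundaryCutoff_mul_add_norm_indicator hU hfr hε hx u
  -- The ascription gives `indicator` the plain `Zero ℝ` instance; with the instance inferred
  -- through `MemLp.indicator`, unifying with the goal times out.
  have hWu : MemLp ((boundaryCollar U ε).indicator u) p (μ.restrict U) := hu.indicator hW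
  rw [← lpNorm_indicator_restrict_of_subset hW boundaryCollar_subset]
  exact lpNorm_le_add_of_norm_le_add hp hφu hWu hpt

lemma lpNorm_fderiv_boundaryCutoff_mul_le {E : Type*} [NormedAddCommGroup E] [NormedSpace ℝ E]
    [FiniteDimensional ℝ E] [MeasurableSpace E] [BorelSpace E] {μ : Measure E}
    [μ.IsAddHaarMeasure] {U : Set E} (hp : 1 ≤ p) (hU : IsOpen U) (hfr : (frontier U).Nonempty)
    (hε : 0 < ε) {u : E → ℝ} (hu : Differentiable ℝ u) (hu_mem : MemLp u p (μ.restrict U))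
    (hDu : MemLp (fderiv ℝ u) p (μ.restrict U)) :
    lpNorm (fderiv ℝ (fun y => boundaryCutoff U ε y * u y)) p (μ.restrict U) ≤
      lpNorm (fderiv ℝ u) p (μ.restrict U) +
        ε⁻¹ * lpNorm u p (μ.restrict (boundaryCollar U ε)) := by
  have hW := measurableSet_boundaryCollar (ε := ε) hU
  have hφ : ∀ᵐ x ∂μ.restrict U, DifferentiableAt ℝ (boundaryCutoff U ε) x :=
    ae_restrict_of_ae lipschitzWith_boundaryCutoff.ae_differentiableAt
  have hbound : ∀ᵐ x ∂μ.restrict U, ‖fderiv ℝ (fun y => boundaryCutoff U ε y * u y) x‖ ≤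
      ‖fderiv ℝ u x‖ + ‖(ε⁻¹ • (boundaryCollar U ε).indicator u) x‖ := by
    filter_upwards [hφ, ae_restrict_mem hU.measurableSet] with x hφx hx
    exact norm_fderiv_boundaryCutoff_mul_le hU hfr hε hx hφx (hu x)
  have hWu : MemLp ((boundaryCollar U ε).indicator u) p (μ.restrict U) := hu_mem.indicator hW
  calc _ ≤ lpNorm (fderiv ℝ u) p (μ.restrict U) +
        lpNorm (ε⁻¹ • (boundaryCollar U ε).indicator u) p (μ.restrict U) :=
      lpNorm_le_add_of_norm_le_add hp hDu (hWu.const_smul _) hbound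
    _ = _ := by
      rw [lpNorm_const_smul, lpNorm_indicator_restrict_of_subset hW boundaryCollar_subset,
        coe_nnnorm, Real.norm_of_nonneg (inv_nonneg.2 hε.le)]

end Estimates

lemma frequency_bound_of_cutoff_bounds {a b c e l₁ l₂ κ : ℝ} (hl₁ : 0 ≤ l₁) (hl₂ : 0 ≤ l₂)
    (hκ : 0 < κ) (hb : b ≤ c + e) (hc : l₁ * c ≤ a + κ * e) (he : l₂ * e ≤ a) :
    l₁ * l₂ / (l₁ + l₂ + κ) * b ≤ a := by
  rw [div_mul_eq_mul_div, div_le_iff₀ (by positivity)]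
  calc l₁ * l₂ * b ≤ l₂ * (l₁ * c) + l₁ * (l₂ * e) := by nlinarith [mul_nonneg hl₁ hl₂]
    _ ≤ l₂ * (a + κ * e) + l₁ * a := by gcongr
    _ = (l₁ + l₂) * a + κ * (l₂ * e) := by ring
    _ ≤ (l₁ + l₂) * a + κ * a := by gcongr
    _ = a * (l₁ + l₂ + κ) := by ring

theorem gromov_frequency_bound_general {n : ℕ} (p : ℝ) (hp : 1 < p)
    (U : Set (EuclideanSpace ℝ (Fin n))) (hU : IsOpen U)
    (eps lam' lam'' : ℝ) (heps : 0 < eps) (hlam' : 0 < lam') (hlam'' : 0 < lam'')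
    (u : EuclideanSpace ℝ (Fin n) → ℝ) (hu : Differentiable ℝ u)
    (hu1 : IntegrableOn (fun x => ‖fderiv ℝ u x‖ ^ p) U)
    (hu2 : IntegrableOn (fun x => |u x| ^ p) U)
    (hune : ¬ ∀ x ∈ {x ∈ U | 0 < Metric.infDist x (frontier U) ∧
        Metric.infDist x (frontier U) < eps}, u x = 0)
    (hphi : lam' * (∫ x in U,
          |min (eps⁻¹ * Metric.infDist x (frontier U)) 1 * u x| ^ p) ^ (1 / p) ≤
        (∫ x in U, ‖fderiv ℝ (fun y =>
          min (eps⁻¹ * Metric.infDist y (frontier U)) 1 * u y) x‖ ^ p) ^ (1 / p))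
    (hcollar : lam'' * (∫ x in {x ∈ U | 0 < Metric.infDist x (frontier U) ∧
          Metric.infDist x (frontier U) < eps}, |u x| ^ p) ^ (1 / p) ≤
        (∫ x in {x ∈ U | 0 < Metric.infDist x (frontier U) ∧
          Metric.infDist x (frontier U) < eps}, ‖fderiv ℝ u x‖ ^ p) ^ (1 / p)) :
    lam' * lam'' / (lam' + lam'' + eps⁻¹) * (∫ x in U, |u x| ^ p) ^ (1 / p) ≤
      (∫ x in U, ‖fderiv ℝ u x‖ ^ p) ^ (1 / p) := by
  have hp₀ : 0 < p := zero_lt_one.trans hp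
  have hq : 1 ≤ ENNReal.ofReal p := ENNReal.one_le_ofReal.2 hp.le
  obtain ⟨x₀, hx₀, -⟩ := not_forall₂.1 hune
  have hfr := frontier_nonempty_of_boundaryCollar_nonempty ⟨x₀, hx₀⟩
  have hu_mem : MemLp u (ENNReal.ofReal p) (volume.restrict U) :=
    memLp_ofReal_of_integrable_norm_rpow hp₀ hu.continuous.aestronglyMeasurable hu2
  have hDu_mem : MemLp (fderiv ℝ u) (ENNReal.ofReal p) (volume.restrict U) :=
    memLp_ofReal_of_integrable_norm_rpow hp₀ (measurable_fderiv ℝ u).aestronglyMeasurable hu1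
  have hsplit := lpNorm_le_lpNorm_boundaryCutoff_mul_add hq hU hfr heps hu_mem
  have hD := lpNorm_fderiv_boundaryCutoff_mul_le hq hU hfr heps hu hu_mem hDu_mem
  have hcoll := lpNorm_mono_measure hDu_mem
    (Measure.restrict_mono (boundaryCollar_subset (ε := eps)) le_rfl)
  have hφu : AEStronglyMeasurable (fun x => boundaryCutoff U eps x * u x) (volume.restrict U) :=
    (continuous_boundaryCutoff.mul hu.continuous).aestronglyMeasurable
  simp only [lpNorm_ofReal_eq_integral_norm_rpow hp₀ hu.continuous.aestronglyMeasurable,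
    lpNorm_ofReal_eq_integral_norm_rpow hp₀ (measurable_fderiv ℝ _).aestronglyMeasurable,
    lpNorm_ofReal_eq_integral_norm_rpow hp₀ hφu,
    Real.norm_eq_abs] at hsplit hD hcoll
  exact frequency_bound_of_cutoff_bounds hlam'.le hlam''.le (inv_pos.2 heps) hsplit
    (hphi.trans hD) (hcollar.trans hcoll)

/-- The analytic core of Gromov's lemma: if the cutoff `φu` has frequency at least `λ'`
and `u` has frequency at least `λ''` on the collar `U_ε`, then `u` has frequency at least
`λ = λ'λ''/(λ' + λ'' + ε⁻¹)` on `U`. -/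
theorem gromov_frequency_bound {n : ℕ} (p : ℝ) (hp : 1 < p)
    (U : Set (EuclideanSpace ℝ (Fin n))) (hU : IsOpen U)
    (hUb : Bornology.IsBounded U)
    (eps lam' lam'' : ℝ) (heps : 0 < eps) (hlam' : 0 < lam') (hlam'' : 0 < lam'')
    (u : EuclideanSpace ℝ (Fin n) → ℝ) (hu : Differentiable ℝ u)
    (hu1 : IntegrableOn (fun x => ‖fderiv ℝ u x‖ ^ p) U)
    (hu2 : IntegrableOn (fun x => |u x| ^ p) U)
    (hune : ¬ ∀ x ∈ {x ∈ U | 0 < Metric.infDist x (frontier U) ∧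
        Metric.infDist x (frontier U) < eps}, u x = 0)
    (hphi : lam' * (∫ x in U,
          |min (eps⁻¹ * Metric.infDist x (frontier U)) 1 * u x| ^ p) ^ (1 / p) ≤
        (∫ x in U, ‖fderiv ℝ (fun y =>
          min (eps⁻¹ * Metric.infDist y (frontier U)) 1 * u y) x‖ ^ p) ^ (1 / p))
    (hcollar : lam'' * (∫ x in {x ∈ U | 0 < Metric.infDist x (frontier U) ∧
          Metric.infDist x (frontier U) < eps}, |u x| ^ p) ^ (1 / p) ≤
        (∫ x in {x ∈ U | 0 < Metric.infDist x (frontier U) ∧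
          Metric.infDist x (frontier U) < eps}, ‖fderiv ℝ u x‖ ^ p) ^ (1 / p)) :
    lam' * lam'' / (lam' + lam'' + eps⁻¹) * (∫ x in U, |u x| ^ p) ^ (1 / p) ≤
      (∫ x in U, ‖fderiv ℝ u x‖ ^ p) ^ (1 / p) :=
  gromov_frequency_bound_general p hp U hU eps lam' lam'' heps hlam' hlam'' u hu hu1 hu2 hune hphi
    hcollar
end
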